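/- arXiv:2502.03006 — 5 statements merged into one kernel-verified Lean document; each statement's English description precedes it below -/
import Mathlib

section
/- Let K : [t0, t1] → ℝ^{m×r} satisfy the K-step ODE K'(t) = −∇ℓ(K(t)V0ᵀ)V0 on [t0, t1] with t1 = t0 + h, h > 0, where V0 ∈ ℝ^{n×r} has orthonormal columns, and let Y_K(t) := K(t)V0ᵀ. Set αK := min over s ∈ [t0, t1] of ‖∇ℓ(Y_K(s))V0‖ (assume this minimum is attained, e.g. by continuity). Then ℓ(Y_K(t1)) ≤ ℓ(Y_K(t0)) − αK² h. -/
open Matrix Set MeasureTheory Filter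

attribute [local instance] Matrix.frobeniusNormedAddCommGroup Matrix.frobeniusNormedSpace

/-- The continuous linear functional `H ↦ ⟨G, H⟩ = tr(Gᵀ H)`, i.e. pairing with `G` in the
Frobenius inner product.  `hgrad : ∀ Y, HasFDerivAt ℓ (frobCLM (G Y)) Y` then states that
`G Y` is the gradient of `ℓ` at `Y` with respect to the Frobenius inner product. -/
noncomputable def frobCLM {m n : ℕ} (G : Matrix (Fin m) (Fin n) ℝ) :
    Matrix (Fin m) (Fin n) ℝ →L[ℝ] ℝ :=
  LinearMap.toContinuousLinearMap
    { toFun := fun H => (Gᵀ * H).trace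
      map_add' := by intro x y; simp [Matrix.mul_add]
      map_smul' := by intro c x; simp [Matrix.mul_smul] }

/-! By the chain rule, `d/dt ℓ(K(t)V0ᵀ) = ⟨∇ℓ, K'(t)V0ᵀ⟩ = ⟨∇ℓ V0, K'(t)⟩ = -‖∇ℓ V0‖²`, which is
at most `-αK²` on `[t0, t1]`; the mean value inequality then gives a decrease of at least
`αK² h` over the step. -/

lemma Matrix.trace_transpose_mul_self_eq_frobenius_norm_sq {a b : Type*} [Fintype a] [Fintype b]
    (A : Matrix a b ℝ) : (Aᵀ * A).trace = ‖A‖ ^ 2 := by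
  rw [frobenius_norm_def, ← Real.rpow_natCast _ 2, ← Real.rpow_mul (by positivity)]
  norm_num
  rw [Matrix.trace, Finset.sum_comm]
  simp [Matrix.mul_apply, sq]

lemma frobCLM_apply {m n : ℕ} (G H : Matrix (Fin m) (Fin n) ℝ) :
    frobCLM G H = (Gᵀ * H).trace :=
  rfl

lemma frobCLM_self {m n : ℕ} (A : Matrix (Fin m) (Fin n) ℝ) : frobCLM A A = ‖A‖ ^ 2 :=
  A.trace_transpose_mul_self_eq_frobenius_norm_sq

lemma frobCLM_apply_mul_transpose {m n r : ℕ} (G : Matrix (Fin m) (Fin n) ℝ)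
    (A : Matrix (Fin m) (Fin r) ℝ) (V : Matrix (Fin n) (Fin r) ℝ) :
    frobCLM G (A * Vᵀ) = frobCLM (G * V) A := by
  rw [frobCLM_apply, frobCLM_apply, ← Matrix.mul_assoc, Matrix.trace_mul_comm, transpose_mul,
    Matrix.mul_assoc]

lemma HasDerivAt.matrix_mul_const {l m n : Type*} [Fintype l] [Fintype m] [Fintype n]
    {K : ℝ → Matrix l m ℝ} {K' : Matrix l m ℝ} {t : ℝ} (hK : HasDerivAt K K' t)
    (B : Matrix m n ℝ) : HasDerivAt (fun t => K t * B) (K' * B) t :=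
  let mulB : Matrix l m ℝ →L[ℝ] Matrix l n ℝ := LinearMap.toContinuousLinearMap
    { toFun := (· * B)
      map_add' := fun _ _ => Matrix.add_mul _ _ _
      map_smul' := fun _ _ => Matrix.smul_mul _ _ _ }
  mulB.hasFDerivAt.comp_hasDerivAt t hK

lemma HasDerivAt.comp_mul_transpose {m n r : ℕ} {ℓ : Matrix (Fin m) (Fin n) ℝ → ℝ}
    {G : Matrix (Fin m) (Fin n) ℝ → Matrix (Fin m) (Fin n) ℝ}
    (hgrad : ∀ Y, HasFDerivAt ℓ (frobCLM (G Y)) Y) {K : ℝ → Matrix (Fin m) (Fin r) ℝ}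
    {K' : Matrix (Fin m) (Fin r) ℝ} {t : ℝ} (hK : HasDerivAt K K' t)
    (V : Matrix (Fin n) (Fin r) ℝ) :
    HasDerivAt (fun t => ℓ (K t * Vᵀ)) (frobCLM (G (K t * Vᵀ) * V) K') t := by
  rw [← frobCLM_apply_mul_transpose]
  exact (hgrad _).comp_hasDerivAt t (hK.matrix_mul_const Vᵀ)

lemma hasDerivAt_loss_of_kstep {m n r : ℕ} {ℓ : Matrix (Fin m) (Fin n) ℝ → ℝ}
    {G : Matrix (Fin m) (Fin n) ℝ → Matrix (Fin m) (Fin n) ℝ}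
    (hgrad : ∀ Y, HasFDerivAt ℓ (frobCLM (G Y)) Y) {V : Matrix (Fin n) (Fin r) ℝ}
    {K : ℝ → Matrix (Fin m) (Fin r) ℝ} {t : ℝ} (hK : HasDerivAt K (-(G (K t * Vᵀ) * V)) t) :
    HasDerivAt (fun t => ℓ (K t * Vᵀ)) (-‖G (K t * Vᵀ) * V‖ ^ 2) t := by
  simpa only [map_neg, frobCLM_self] using hK.comp_mul_transpose hgrad V

lemma sub_le_mul_sub_of_hasDerivAt_le {f f' : ℝ → ℝ} {a b C : ℝ} (hab : a ≤ b)
    (hf : ∀ t ∈ Icc a b, HasDerivAt f (f' t) t) (hf' : ∀ t ∈ Icc a b, f' t ≤ C) :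
    f b - f a ≤ C * (b - a) := by
  refine (convex_Icc a b).image_sub_le_mul_sub_of_deriv_le
    (fun t ht => (hf t ht).continuousAt.continuousWithinAt) (fun t ht => ?_) (fun t ht => ?_)
    a (left_mem_Icc.2 hab) b (right_mem_Icc.2 hab) hab
  all_goals rw [interior_Icc] at ht
  · exact (hf t (Ioo_subset_Icc_self ht)).differentiableAt.differentiableWithinAt
  · exact (hf t (Ioo_subset_Icc_self ht)).deriv ▸ hf' t (Ioo_subset_Icc_self ht)

theorem kstep_loss_descent_general {m n r : ℕ}
    (ℓ : Matrix (Fin m) (Fin n) ℝ → ℝ)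
    (G : Matrix (Fin m) (Fin n) ℝ → Matrix (Fin m) (Fin n) ℝ)
    (hgrad : ∀ Y, HasFDerivAt ℓ (frobCLM (G Y)) Y)
    (V0 : Matrix (Fin n) (Fin r) ℝ)
    (t0 t1 h : ℝ) (hh : 0 < h) (ht1 : t1 = t0 + h)
    (K : ℝ → Matrix (Fin m) (Fin r) ℝ)
    (hK : ∀ t ∈ Set.Icc t0 t1, HasDerivAt K (-(G (K t * V0ᵀ) * V0)) t)
    (αK : ℝ)
    (hαK : IsLeast ((fun s => ‖G (K s * V0ᵀ) * V0‖) '' Set.Icc t0 t1) αK) :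
    ℓ (K t1 * V0ᵀ) ≤ ℓ (K t0 * V0ᵀ) - αK ^ 2 * h := by
  have hαK_nonneg : 0 ≤ αK := by
    obtain ⟨s, -, rfl⟩ := hαK.1
    positivity
  have hslope : ∀ t ∈ Icc t0 t1, -‖G (K t * V0ᵀ) * V0‖ ^ 2 ≤ -αK ^ 2 := fun t ht =>
    neg_le_neg (pow_le_pow_left₀ hαK_nonneg (hαK.2 ⟨t, ht, rfl⟩) 2)
  have hdescent := sub_le_mul_sub_of_hasDerivAt_le (by linarith)
    (fun t ht => hasDerivAt_loss_of_kstep hgrad (hK t ht)) hslope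
  subst ht1
  linarith

/-- along the K-step on `[t0, t0+h]`, with `αK` the (attained) minimum of
`‖∇ℓ(K(s)V0ᵀ)V0‖` over `s ∈ [t0,t1]`, one has `ℓ(Y_K(t1)) ≤ ℓ(Y_K(t0)) − αK² h`. -/
theorem kstep_loss_descent {m n r : ℕ}
    (ℓ : Matrix (Fin m) (Fin n) ℝ → ℝ)
    (G : Matrix (Fin m) (Fin n) ℝ → Matrix (Fin m) (Fin n) ℝ)
    (hgrad : ∀ Y, HasFDerivAt ℓ (frobCLM (G Y)) Y)
    (V0 : Matrix (Fin n) (Fin r) ℝ) (hV0 : V0ᵀ * V0 = 1)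
    (t0 t1 h : ℝ) (hh : 0 < h) (ht1 : t1 = t0 + h)
    (K : ℝ → Matrix (Fin m) (Fin r) ℝ)
    (hK : ∀ t ∈ Set.Icc t0 t1, HasDerivAt K (-(G (K t * V0ᵀ) * V0)) t)
    (αK : ℝ)
    (hαK : IsLeast ((fun s => ‖G (K s * V0ᵀ) * V0‖) '' Set.Icc t0 t1) αK) :
    ℓ (K t1 * V0ᵀ) ≤ ℓ (K t0 * V0ᵀ) - αK ^ 2 * h :=
  kstep_loss_descent_general ℓ G hgrad V0 t0 t1 h hh ht1 K hK αK hαK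
end

section
/- Let h > 0, t1 = t0 + h. Assume ∇ℓ is Lipschitz with constant c_l > 0 and bounded by B > 0 in Frobenius norm. Let V0 ∈ ℝ^{n×r} and U1 ∈ ℝ^{m×r} have orthonormal columns, let K : [t0,t1] → ℝ^{m×r} satisfy K'(t) = −∇ℓ(K(t)V0ᵀ)V0, and let S̃ : [t0,t1] → ℝ^{r×r} satisfy S̃'(t) = +U1ᵀ∇ℓ(U1 S̃(t)V0ᵀ)V0 with U1 S̃(t0) = K(t1). Then the matrix Δ := ∫_{t0}^{t1} ∇ℓ(K(t)V0ᵀ) dt − ∫_{t0}^{t1} ∇ℓ(U1 S̃(t)V0ᵀ) dt satisfies ‖Δ‖ ≤ 2 c_l B h². -/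
/-! Multiplication by a matrix with orthonormal columns, or by its transpose, does not increase
the Frobenius norm, so `K` and `U₁ S̃` both move with speed at most `B`. Since `U₁ S̃` starts at
`t₀` from the point `K(t₁)` where `K` ends, the two trajectories stay within
`B (t₁ - t) + B (t - t₀) = B h` of each other on `[t₀, t₁]`. Lipschitz continuity of `∇ℓ` then
bounds the integrands' difference by `c_l B h`, and integrating over `[t₀, t₁]` gives
`c_l B h² ≤ 2 c_l B h²`. -/

open Matrix Set MeasureTheory Filter

attribute [local instance] Matrix.frobeniusNormedAddCommGroup Matrix.frobeniusNormedSpace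

namespace Matrix

variable {l m n : Type*} [Fintype l] [Fintype m] [Fintype n]

theorem frobenius_norm_sq_eq_trace (A : Matrix m n ℝ) : ‖A‖ ^ 2 = (Aᵀ * A).trace := by
  rw [frobenius_norm_def, ← Real.sqrt_eq_rpow, Real.sq_sqrt (by positivity), Finset.sum_comm]
  simp only [trace, diag, mul_apply, transpose_apply, Real.norm_eq_abs, Real.rpow_two, sq_abs,
    ← sq]

theorem frobenius_norm_sq_eq_trace_mul_transpose (A : Matrix m n ℝ) :
    ‖A‖ ^ 2 = (A * Aᵀ).trace := by
  rw [← frobenius_norm_transpose, frobenius_norm_sq_eq_trace, transpose_transpose]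

variable [DecidableEq n]

theorem frobenius_norm_mul_of_orthonormal_cols {U : Matrix m n ℝ} (hU : Uᵀ * U = 1)
    (X : Matrix n l ℝ) : ‖U * X‖ = ‖X‖ := by
  refine (sq_eq_sq₀ (norm_nonneg _) (norm_nonneg _)).1 ?_
  rw [frobenius_norm_sq_eq_trace, frobenius_norm_sq_eq_trace, transpose_mul, Matrix.mul_assoc,
    ← Matrix.mul_assoc Uᵀ, hU, Matrix.one_mul]

theorem frobenius_norm_mul_transpose_of_orthonormal_cols {V : Matrix m n ℝ} (hV : Vᵀ * V = 1)
    (X : Matrix l n ℝ) : ‖X * Vᵀ‖ = ‖X‖ := by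
  rw [← frobenius_norm_transpose, transpose_mul, transpose_transpose,
    frobenius_norm_mul_of_orthonormal_cols hV, frobenius_norm_transpose]

/-- Pythagoras for the orthogonal projection `V * Vᵀ` onto the column space of `V`. -/
theorem frobenius_norm_sq_eq_add_of_orthonormal_cols {V : Matrix m n ℝ} (hV : Vᵀ * V = 1)
    (X : Matrix l m ℝ) : ‖X‖ ^ 2 = ‖X * V‖ ^ 2 + ‖X - X * V * Vᵀ‖ ^ 2 := by
  have hgram : (X - X * V * Vᵀ) * (X - X * V * Vᵀ)ᵀ = X * Xᵀ - X * V * (X * V)ᵀ := by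
    simp only [transpose_sub, transpose_mul, transpose_transpose, Matrix.sub_mul,
      Matrix.mul_sub, Matrix.mul_assoc]
    rw [← Matrix.mul_assoc Vᵀ V, hV, Matrix.one_mul]
    abel
  rw [frobenius_norm_sq_eq_trace_mul_transpose (X - _), hgram, trace_sub,
    ← frobenius_norm_sq_eq_trace_mul_transpose, ← frobenius_norm_sq_eq_trace_mul_transpose]
  ring

theorem frobenius_norm_mul_le_of_orthonormal_cols {V : Matrix m n ℝ} (hV : Vᵀ * V = 1)
    (X : Matrix l m ℝ) : ‖X * V‖ ≤ ‖X‖ := by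
  refine (sq_le_sq₀ (norm_nonneg _) (norm_nonneg _)).1 ?_
  rw [frobenius_norm_sq_eq_add_of_orthonormal_cols hV X]
  exact le_add_of_nonneg_right (sq_nonneg _)

theorem frobenius_norm_transpose_mul_le_of_orthonormal_cols {U : Matrix m n ℝ}
    (hU : Uᵀ * U = 1) (X : Matrix m l ℝ) : ‖Uᵀ * X‖ ≤ ‖X‖ := by
  rw [← frobenius_norm_transpose, transpose_mul, transpose_transpose, ← frobenius_norm_transpose X]
  exact frobenius_norm_mul_le_of_orthonormal_cols hU Xᵀ

end Matrix

section IntervalBounds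

variable {E : Type*} [NormedAddCommGroup E] [NormedSpace ℝ E]

theorem norm_image_sub_le_of_norm_hasDerivAt_le {f f' : ℝ → E} {a b C x y : ℝ}
    (hf : ∀ t ∈ Icc a b, HasDerivAt f (f' t) t) (bound : ∀ t ∈ Icc a b, ‖f' t‖ ≤ C)
    (hx : x ∈ Icc a b) (hy : y ∈ Icc a b) (hxy : x ≤ y) : ‖f y - f x‖ ≤ C * (y - x) :=
  have hsub : Icc x y ⊆ Icc a b := Icc_subset_Icc hx.1 hy.2
  norm_image_sub_le_of_norm_deriv_le_segment' (fun t ht => (hf t (hsub ht)).hasDerivWithinAt)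
    (fun t ht => bound t (hsub (Ico_subset_Icc_self ht))) y (right_mem_Icc.2 hxy)

theorem norm_intervalIntegral_sub_le_of_norm_sub_le {f g : ℝ → E} {a b C : ℝ} (hab : a ≤ b)
    (hf : ContinuousOn f (Icc a b)) (hg : ContinuousOn g (Icc a b))
    (hfg : ∀ t ∈ Icc a b, ‖f t - g t‖ ≤ C) :
    ‖(∫ t in a..b, f t) - ∫ t in a..b, g t‖ ≤ C * (b - a) := by
  rw [← intervalIntegral.integral_sub (hf.intervalIntegrable_of_Icc hab)
    (hg.intervalIntegrable_of_Icc hab), ← abs_of_nonneg (sub_nonneg.2 hab)]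
  refine intervalIntegral.norm_integral_le_of_norm_le_const fun t ht => hfg t ?_
  rw [uIoc_of_le hab] at ht
  exact Ioc_subset_Icc_self ht

end IntervalBounds

theorem norm_sub_orthonormal_mul_le_of_hasDerivAt {m n r : Type*} [Fintype m] [Fintype n]
    [Fintype r] [DecidableEq r] {U : Matrix m r ℝ} (hU : Uᵀ * U = 1)
    {f f' : ℝ → Matrix m n ℝ} {S S' : ℝ → Matrix r n ℝ} {a b C t : ℝ}
    (hf : ∀ t ∈ Icc a b, HasDerivAt f (f' t) t) (hf' : ∀ t ∈ Icc a b, ‖f' t‖ ≤ C)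
    (hS : ∀ t ∈ Icc a b, HasDerivAt S (S' t) t) (hS' : ∀ t ∈ Icc a b, ‖S' t‖ ≤ C)
    (hSf : U * S a = f b) (ht : t ∈ Icc a b) : ‖f t - U * S t‖ ≤ C * (b - a) :=
  have hab : a ≤ b := ht.1.trans ht.2
  calc ‖f t - U * S t‖ = ‖-(f b - f t) - U * (S t - S a)‖ := by
        rw [Matrix.mul_sub, hSf]; abel_nf
    _ ≤ ‖f b - f t‖ + ‖S t - S a‖ := by
        rw [← frobenius_norm_mul_of_orthonormal_cols hU (S t - S a), ← norm_neg (f b - f t)]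
        exact norm_sub_le _ _
    _ ≤ C * (b - t) + C * (t - a) :=
        add_le_add (norm_image_sub_le_of_norm_hasDerivAt_le hf hf' ht (right_mem_Icc.2 hab) ht.2)
          (norm_image_sub_le_of_norm_hasDerivAt_le hS hS' (left_mem_Icc.2 hab) ht ht.1)
    _ = C * (b - a) := by ring

theorem psi_delta_bound_general {m n r : ℕ}
    (G : Matrix (Fin m) (Fin n) ℝ → Matrix (Fin m) (Fin n) ℝ)
    (cl B : ℝ) (hcl : 0 < cl)
    (hlip : ∀ Z1 Z2, ‖G Z1 - G Z2‖ ≤ cl * ‖Z1 - Z2‖)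
    (hbound : ∀ Z, ‖G Z‖ ≤ B)
    (t0 t1 h : ℝ) (hh : 0 < h) (ht1 : t1 = t0 + h)
    (V0 : Matrix (Fin n) (Fin r) ℝ) (hV0 : V0ᵀ * V0 = 1)
    (U1 : Matrix (Fin m) (Fin r) ℝ) (hU1 : U1ᵀ * U1 = 1)
    (K : ℝ → Matrix (Fin m) (Fin r) ℝ)
    (hK : ∀ t ∈ Set.Icc t0 t1, HasDerivAt K (-(G (K t * V0ᵀ) * V0)) t)
    (S : ℝ → Matrix (Fin r) (Fin r) ℝ)
    (hS : ∀ t ∈ Set.Icc t0 t1, HasDerivAt S (U1ᵀ * G (U1 * S t * V0ᵀ) * V0) t)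
    (hS0 : U1 * S t0 = K t1) :
    ‖(∫ t in t0..t1, G (K t * V0ᵀ)) - ∫ t in t0..t1, G (U1 * S t * V0ᵀ)‖ ≤
      2 * cl * B * h ^ 2 := by
  have hB : 0 ≤ B := (norm_nonneg _).trans (hbound 0)
  have ht01 : t0 ≤ t1 := by linarith
  have hG : Continuous G :=
    (LipschitzWith.of_dist_le' (K := cl) (by simpa only [dist_eq_norm] using hlip)).continuous
  have hK' : ∀ t ∈ Icc t0 t1, ‖-(G (K t * V0ᵀ) * V0)‖ ≤ B := fun t _ => by
    rw [norm_neg]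
    exact (frobenius_norm_mul_le_of_orthonormal_cols hV0 _).trans (hbound _)
  have hS' : ∀ t ∈ Icc t0 t1, ‖U1ᵀ * G (U1 * S t * V0ᵀ) * V0‖ ≤ B := fun t _ =>
    (frobenius_norm_mul_le_of_orthonormal_cols hV0 _).trans
      ((frobenius_norm_transpose_mul_le_of_orthonormal_cols hU1 _).trans (hbound _))
  have hKS : ∀ t ∈ Icc t0 t1, ‖K t - U1 * S t‖ ≤ B * h := fun t ht => by
    simpa only [ht1, add_sub_cancel_left] using
      norm_sub_orthonormal_mul_le_of_hasDerivAt hU1 hK hK' hS hS' hS0 ht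
  have hKc : ContinuousOn K (Icc t0 t1) := fun t ht => (hK t ht).continuousAt.continuousWithinAt
  have hSc : ContinuousOn S (Icc t0 t1) := fun t ht => (hS t ht).continuousAt.continuousWithinAt
  calc _ ≤ cl * (B * h) * (t1 - t0) :=
        norm_intervalIntegral_sub_le_of_norm_sub_le ht01
          ((hG.comp (continuous_id.matrix_mul continuous_const)).comp_continuousOn hKc)
          ((hG.comp ((continuous_const.matrix_mul continuous_id).matrix_mul
            continuous_const)).comp_continuousOn hSc)
          fun t ht => (hlip _ _).trans <| by
            rw [← Matrix.sub_mul, frobenius_norm_mul_transpose_of_orthonormal_cols hV0]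
            exact mul_le_mul_of_nonneg_left (hKS t ht) hcl.le
    _ ≤ 2 * cl * B * h ^ 2 := by rw [ht1]; nlinarith [mul_nonneg (mul_nonneg hcl.le hB) (sq_nonneg h)]

/-- bound on `Δ = ∫∇ℓ(K(t)V0ᵀ)dt − ∫∇ℓ(U1 S̃(t)V0ᵀ)dt` for the PSI K- and
S-steps: `‖Δ‖ ≤ 2 c_l B h²`. -/
theorem psi_delta_bound {m n r : ℕ}
    (ℓ : Matrix (Fin m) (Fin n) ℝ → ℝ)
    (G : Matrix (Fin m) (Fin n) ℝ → Matrix (Fin m) (Fin n) ℝ)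
    (hgrad : ∀ Y, HasFDerivAt ℓ (frobCLM (G Y)) Y)
    (cl B : ℝ) (hcl : 0 < cl) (hB : 0 < B)
    (hlip : ∀ Z1 Z2, ‖G Z1 - G Z2‖ ≤ cl * ‖Z1 - Z2‖)
    (hbound : ∀ Z, ‖G Z‖ ≤ B)
    (t0 t1 h : ℝ) (hh : 0 < h) (ht1 : t1 = t0 + h)
    (V0 : Matrix (Fin n) (Fin r) ℝ) (hV0 : V0ᵀ * V0 = 1)
    (U1 : Matrix (Fin m) (Fin r) ℝ) (hU1 : U1ᵀ * U1 = 1)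
    (K : ℝ → Matrix (Fin m) (Fin r) ℝ)
    (hK : ∀ t ∈ Set.Icc t0 t1, HasDerivAt K (-(G (K t * V0ᵀ) * V0)) t)
    (S : ℝ → Matrix (Fin r) (Fin r) ℝ)
    (hS : ∀ t ∈ Set.Icc t0 t1, HasDerivAt S (U1ᵀ * G (U1 * S t * V0ᵀ) * V0) t)
    (hS0 : U1 * S t0 = K t1) :
    ‖(∫ t in t0..t1, G (K t * V0ᵀ)) - ∫ t in t0..t1, G (U1 * S t * V0ᵀ)‖ ≤
      2 * cl * B * h ^ 2 :=
  psi_delta_bound_general G cl B hcl hlip hbound t0 t1 h hh ht1 V0 hV0 U1 hU1 K hK S hS hS0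
end

section
/- (One-step deviation between PSI and backward-corrected PSI.) Let h ∈ (0,1], t1 = t0 + h. Assume ∇ℓ is Lipschitz with constant c_l > 0 and bounded by B > 0 in Frobenius norm. Let U1 ∈ ℝ^{m×r} and V0 ∈ ℝ^{n×r} have orthonormal columns, and let S̃1, S̄1 ∈ ℝ^{r×r} satisfy ‖S̃1 − S̄1‖ ≤ 2 c_l B h². Let L̃, L̄ : [t0,t1] → ℝ^{n×r} both solve the L-step ODE L'(t) = −∇ℓ(U1 L(t)ᵀ)ᵀU1 with initial conditions L̃(t0) = V0 S̃1ᵀ and L̄(t0) = V0 S̄1ᵀ respectively. Then ‖L̃(t1) − L̄(t1)‖ ≤ 2 c_l B h² + 2 c_l² B h³ + c_l B h², and consequently the PSI and backward-corrected PSI one-step outputs Ỹ1 = U1 L̃(t1)ᵀ and Ȳ1 = U1 L̄(t1)ᵀ satisfy ‖Ỹ1 − Ȳ1‖ ≤ 2 c_l B h² + 2 c_l² B h³ + c_l B h². -/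
open Matrix Set MeasureTheory Filter

attribute [local instance] Matrix.frobeniusNormedAddCommGroup Matrix.frobeniusNormedSpace

lemma frob_sq {a b : ℕ} (A : Matrix (Fin a) (Fin b) ℝ) : ‖A‖ ^ 2 = (Aᵀ * A).trace := by
  have hS : (0:ℝ) ≤ ∑ i, ∑ j, ‖A i j‖ ^ (2:ℝ) := by
    positivity
  rw [Matrix.frobenius_norm_def]
  rw [← Real.rpow_natCast ((∑ i, ∑ j, ‖A i j‖ ^ (2:ℝ)) ^ (1/2:ℝ)) 2, ← Real.rpow_mul hS]
  norm_num
  rw [Finset.sum_comm]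
  simp [Matrix.trace, Matrix.mul_apply, Matrix.diag, sq]

lemma frob_mul_left {a b c : ℕ} (U : Matrix (Fin a) (Fin b) ℝ) (hU : Uᵀ * U = 1)
    (M : Matrix (Fin b) (Fin c) ℝ) : ‖U * M‖ = ‖M‖ := by
  have h1 : ‖U * M‖ ^ 2 = ‖M‖ ^ 2 := by
    rw [frob_sq, frob_sq, Matrix.transpose_mul]
    rw [show Mᵀ * Uᵀ * (U * M) = Mᵀ * (Uᵀ * U) * M by simp only [Matrix.mul_assoc], hU, Matrix.mul_one]
  nlinarith [norm_nonneg (U * M), norm_nonneg M]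

lemma frob_mul_right_le {a b c : ℕ} (U : Matrix (Fin b) (Fin c) ℝ) (hU : Uᵀ * U = 1)
    (M : Matrix (Fin a) (Fin b) ℝ) : ‖M * U‖ ≤ ‖M‖ := by
  set P : Matrix (Fin b) (Fin b) ℝ := 1 - U * Uᵀ with hP
  have hPt : Pᵀ = P := by simp [hP, Matrix.transpose_sub, Matrix.transpose_mul]
  have hPP : P * P = P := by
    simp only [hP, Matrix.sub_mul, Matrix.mul_sub, Matrix.one_mul, Matrix.mul_one]
    rw [show U * Uᵀ * (U * Uᵀ) = U * (Uᵀ * U) * Uᵀ by simp only [Matrix.mul_assoc], hU, Matrix.mul_one]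
    abel
  have key : ‖M * U‖ ^ 2 + ‖M * P‖ ^ 2 = ‖M‖ ^ 2 := by
    rw [frob_sq, frob_sq, frob_sq, Matrix.transpose_mul, Matrix.transpose_mul, hPt]
    have e1 : Uᵀ * Mᵀ * (M * U) = Uᵀ * (Mᵀ * M * U) := by simp only [Matrix.mul_assoc]
    have e2 : P * Mᵀ * (M * P) = P * (Mᵀ * M * P) := by simp only [Matrix.mul_assoc]
    rw [e1, e2, Matrix.trace_mul_comm Uᵀ, Matrix.trace_mul_comm P]
    rw [show Mᵀ * M * U * Uᵀ = Mᵀ * M * (U * Uᵀ) by simp only [Matrix.mul_assoc]]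
    rw [show Mᵀ * M * P * P = Mᵀ * M * (P * P) by simp only [Matrix.mul_assoc], hPP]
    rw [hP, Matrix.mul_sub, Matrix.mul_one, Matrix.trace_sub]
    ring
  nlinarith [norm_nonneg (M * U), norm_nonneg M, sq_nonneg ‖M * P‖]

/-- One-step deviation between PSI and backward-corrected PSI: if the
coefficient matrices satisfy `‖S̃1 − S̄1‖ ≤ 2 c_l B h²` (here `St1` is `S̃1`, `Sb1` is `S̄1`)
and `L̃ = Lt`, `L̄ = Lb` both solve the L-step ODE with initial conditions `V0 S̃1ᵀ` and
`V0 S̄1ᵀ`, then `‖L̃(t1) − L̄(t1)‖ ≤ 2 c_l B h² + 2 c_l² B h³ + c_l B h²`, and the same bound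
holds for the one-step outputs `Ỹ1 = U1 L̃(t1)ᵀ` and `Ȳ1 = U1 L̄(t1)ᵀ`. -/
theorem psi_bcpsi_one_step_deviation {m n r : ℕ}
    (ℓ : Matrix (Fin m) (Fin n) ℝ → ℝ)
    (G : Matrix (Fin m) (Fin n) ℝ → Matrix (Fin m) (Fin n) ℝ)
    (hgrad : ∀ Y, HasFDerivAt ℓ (frobCLM (G Y)) Y)
    (cl B : ℝ) (hcl : 0 < cl) (hB : 0 < B)
    (hlip : ∀ Z1 Z2, ‖G Z1 - G Z2‖ ≤ cl * ‖Z1 - Z2‖)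
    (hbound : ∀ Z, ‖G Z‖ ≤ B)
    (t0 t1 h : ℝ) (hh : 0 < h) (hh1 : h ≤ 1) (ht1 : t1 = t0 + h)
    (U1 : Matrix (Fin m) (Fin r) ℝ) (hU1 : U1ᵀ * U1 = 1)
    (V0 : Matrix (Fin n) (Fin r) ℝ) (hV0 : V0ᵀ * V0 = 1)
    (St1 Sb1 : Matrix (Fin r) (Fin r) ℝ)
    (hSdev : ‖St1 - Sb1‖ ≤ 2 * cl * B * h ^ 2)
    (Lt Lb : ℝ → Matrix (Fin n) (Fin r) ℝ)
    (hLt : ∀ t ∈ Set.Icc t0 t1, HasDerivAt Lt (-((G (U1 * (Lt t)ᵀ))ᵀ * U1)) t)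
    (hLt0 : Lt t0 = V0 * St1ᵀ)
    (hLb : ∀ t ∈ Set.Icc t0 t1, HasDerivAt Lb (-((G (U1 * (Lb t)ᵀ))ᵀ * U1)) t)
    (hLb0 : Lb t0 = V0 * Sb1ᵀ) :
    ‖Lt t1 - Lb t1‖ ≤ 2 * cl * B * h ^ 2 + 2 * cl ^ 2 * B * h ^ 3 + cl * B * h ^ 2 ∧
    ‖U1 * (Lt t1)ᵀ - U1 * (Lb t1)ᵀ‖ ≤
      2 * cl * B * h ^ 2 + 2 * cl ^ 2 * B * h ^ 3 + cl * B * h ^ 2 := by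
  -- abbreviations
  have hU1' : ∀ (M : Matrix (Fin r) (Fin n) ℝ), ‖U1 * M‖ = ‖M‖ := frob_mul_left U1 hU1
  have hrU : ∀ (M : Matrix (Fin n) (Fin m) ℝ), ‖M * U1‖ ≤ ‖M‖ := frob_mul_right_le U1 hU1
  set δ : ℝ := 2 * cl * B * h ^ 2 with hδ
  have htt : t0 ≤ t1 := by rw [ht1]; linarith
  -- initial deviation
  have hft0 : ‖Lt t0 - Lb t0‖ ≤ δ := by
    rw [hLt0, hLb0, ← Matrix.mul_sub, ← Matrix.transpose_sub, frob_mul_left V0 hV0,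
      Matrix.frobenius_norm_transpose]
    exact hSdev
  -- derivative norms are ≤ B
  have hderivLt : ∀ x ∈ Set.Icc t0 t1, ‖-((G (U1 * (Lt x)ᵀ))ᵀ * U1)‖ ≤ B := by
    intro x hx
    rw [norm_neg]
    calc ‖(G (U1 * (Lt x)ᵀ))ᵀ * U1‖ ≤ ‖(G (U1 * (Lt x)ᵀ))ᵀ‖ := hrU _
      _ = ‖G (U1 * (Lt x)ᵀ)‖ := Matrix.frobenius_norm_transpose _
      _ ≤ B := hbound _
  have hderivLb : ∀ x ∈ Set.Icc t0 t1, ‖-((G (U1 * (Lb x)ᵀ))ᵀ * U1)‖ ≤ B := by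
    intro x hx
    rw [norm_neg]
    calc ‖(G (U1 * (Lb x)ᵀ))ᵀ * U1‖ ≤ ‖(G (U1 * (Lb x)ᵀ))ᵀ‖ := hrU _
      _ = ‖G (U1 * (Lb x)ᵀ)‖ := Matrix.frobenius_norm_transpose _
      _ ≤ B := hbound _
  -- increment bounds
  have hLtinc : ∀ x ∈ Set.Icc t0 t1, ‖Lt x - Lt t0‖ ≤ B * (x - t0) :=
    norm_image_sub_le_of_norm_deriv_right_le_segment
      (fun x hx => (hLt x hx).continuousAt.continuousWithinAt)
      (fun x hx => ((hLt x (Set.Ico_subset_Icc_self hx)).hasDerivWithinAt))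
      (fun x hx => hderivLt x (Set.Ico_subset_Icc_self hx))
  have hLbinc : ∀ x ∈ Set.Icc t0 t1, ‖Lb x - Lb t0‖ ≤ B * (x - t0) :=
    norm_image_sub_le_of_norm_deriv_right_le_segment
      (fun x hx => (hLb x hx).continuousAt.continuousWithinAt)
      (fun x hx => ((hLb x (Set.Ico_subset_Icc_self hx)).hasDerivWithinAt))
      (fun x hx => hderivLb x (Set.Ico_subset_Icc_self hx))
  -- crude bound on the deviation
  have hfcrude : ∀ x ∈ Set.Icc t0 t1, ‖Lt x - Lb x‖ ≤ δ + 2 * B * (x - t0) := by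
    intro x hx
    have e : Lt x - Lb x = (Lt t0 - Lb t0) + ((Lt x - Lt t0) - (Lb x - Lb t0)) := by abel
    calc ‖Lt x - Lb x‖ = ‖(Lt t0 - Lb t0) + ((Lt x - Lt t0) - (Lb x - Lb t0))‖ := by rw [← e]
      _ ≤ ‖Lt t0 - Lb t0‖ + ‖(Lt x - Lt t0) - (Lb x - Lb t0)‖ := norm_add_le _ _
      _ ≤ ‖Lt t0 - Lb t0‖ + (‖Lt x - Lt t0‖ + ‖Lb x - Lb t0‖) := by
          linarith [norm_sub_le (Lt x - Lt t0) (Lb x - Lb t0)]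
      _ ≤ δ + 2 * B * (x - t0) := by
          have := hLtinc x hx; have := hLbinc x hx; linarith
  -- fencing argument
  set f : ℝ → Matrix (Fin n) (Fin r) ℝ := fun t => Lt t - Lb t with hf
  set f' : ℝ → Matrix (Fin n) (Fin r) ℝ := fun t =>
    -((G (U1 * (Lt t)ᵀ))ᵀ * U1) - -((G (U1 * (Lb t)ᵀ))ᵀ * U1) with hf'
  set φ : ℝ → ℝ := fun t => δ + cl * δ * (t - t0) + cl * B * (t - t0) ^ 2 with hφ
  have hφ' : ∀ x : ℝ, HasDerivAt φ (cl * δ + 2 * cl * B * (x - t0)) x := by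
    intro x
    have h1 : HasDerivAt (fun t : ℝ => t - t0) 1 x := (hasDerivAt_id x).sub_const t0
    have h2 : HasDerivAt (fun t : ℝ => δ + cl * δ * (t - t0) + cl * B * (t - t0) ^ 2)
        (cl * δ * 1 + cl * B * (2 * (x - t0) ^ 1 * 1)) x :=
      ((h1.const_mul (cl * δ)).const_add δ).add ((h1.pow 2).const_mul (cl * B))
    convert h2 using 1
    ring
  have hfd : ∀ x ∈ Set.Icc t0 t1, HasDerivAt f (f' x) x := fun x hx =>
    (hLt x hx).sub (hLb x hx)
  have bound : ∀ x ∈ Set.Ico t0 t1, ‖f' x‖ ≤ cl * δ + 2 * cl * B * (x - t0) := by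
    intro x hx
    have hx' : x ∈ Set.Icc t0 t1 := Set.Ico_subset_Icc_self hx
    have e : f' x = (G (U1 * (Lb x)ᵀ) - G (U1 * (Lt x)ᵀ))ᵀ * U1 := by
      simp only [hf', Matrix.transpose_sub, Matrix.sub_mul]
      abel
    have h1 : ‖f' x‖ ≤ cl * ‖f x‖ := by
      rw [e]
      calc ‖(G (U1 * (Lb x)ᵀ) - G (U1 * (Lt x)ᵀ))ᵀ * U1‖
          ≤ ‖(G (U1 * (Lb x)ᵀ) - G (U1 * (Lt x)ᵀ))ᵀ‖ := hrU _
        _ = ‖G (U1 * (Lb x)ᵀ) - G (U1 * (Lt x)ᵀ)‖ := Matrix.frobenius_norm_transpose _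
        _ ≤ cl * ‖U1 * (Lb x)ᵀ - U1 * (Lt x)ᵀ‖ := hlip _ _
        _ = cl * ‖f x‖ := by
            rw [← Matrix.mul_sub, ← Matrix.transpose_sub, hU1',
              Matrix.frobenius_norm_transpose, ← norm_neg]
            simp [hf]
    have h2 : ‖f x‖ ≤ δ + 2 * B * (x - t0) := hfcrude x hx'
    have hx0 : t0 ≤ x := hx.1
    nlinarith [hcl.le, hB.le]
  have main : ‖f t1‖ ≤ φ t1 := by
    refine image_norm_le_of_norm_deriv_right_le_deriv_boundary
      (fun x hx => (hfd x hx).continuousAt.continuousWithinAt)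
      (fun x hx => (hfd x (Set.Ico_subset_Icc_self hx)).hasDerivWithinAt)
      ?_ hφ' bound (Set.right_mem_Icc.2 htt)
    simpa [hφ] using hft0
  have hφt1 : φ t1 = 2 * cl * B * h ^ 2 + 2 * cl ^ 2 * B * h ^ 3 + cl * B * h ^ 2 := by
    simp only [hφ, hδ, ht1]
    ring
  have key : ‖Lt t1 - Lb t1‖ ≤ 2 * cl * B * h ^ 2 + 2 * cl ^ 2 * B * h ^ 3 + cl * B * h ^ 2 := by
    rw [← hφt1]; exact main
  refine ⟨key, ?_⟩
  rw [← Matrix.mul_sub, ← Matrix.transpose_sub, hU1', Matrix.frobenius_norm_transpose]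
  exact key
end

section
/- (Local error of the abc-PSI after truncation.) Under the hypotheses of the local robust error bound of the abc-PSI — namely ∇ℓ Lipschitz with constant c_l > 0 and bounded by B > 0, Y0 = U0S0V0ᵀ with U0, V0 having orthonormal columns, residual bound ‖∇ℓ(Y0) − P(Y0)∇ℓ(Y0)‖ ≤ ε, W the solution of W' = −∇ℓ(W) with W(t0) = Y0, and Ŷ1 the one-step abc-PSI output at t1 = t0 + h — if additionally the truncated output Y1 satisfies ‖Ŷ1 − Y1‖ ≤ ϑ, then ‖Y1 − W(t1)‖ ≤ h ε + 3 c_l B h² + ϑ. -/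
/-!
Since `‖Ŷ₁ - Y₁‖ ≤ ϑ`, it suffices to compare `Ŷ(t) = Û₁ L(t)ᵀ` with `W`. With `P = Û₁ Û₁ᵀ`,
`Ŷ` solves the projected flow `Ŷ' = -P G(Ŷ)`, so
`Ŷ' - W' = (G(W) - G(Y₀)) + (1 - P) G(Y₀) + P (G(Y₀) - G(Ŷ))`. All flows move at speed at most
`B`, so by the Lipschitz bound the outer terms are at most `c_l B h`. The middle term splits
into `(1 - P)` applied to the residual `G(Y₀) - P(Y₀) G(Y₀)`, which is at most `ε` because
`P U₀ = U₀`, plus `(1 - P) G(Y₀) V₀ V₀ᵀ`. The latter is at most `c_l B h`: the K-step curve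
`K V₀ᵀ` has velocity `-G(K V₀ᵀ) V₀ V₀ᵀ` and starts and ends in the range of `P`.
-/

open Matrix Set MeasureTheory Filter

attribute [local instance] Matrix.frobeniusNormedAddCommGroup Matrix.frobeniusNormedSpace

section FrobeniusProjection

variable {m n k : Type*} [Fintype m] [Fintype n]

theorem Matrix.frobenius_norm_sq_eq_trace_s13 (A : Matrix m n ℝ) : ‖A‖ ^ 2 = (Aᵀ * A).trace := by
  rw [frobenius_norm_def, ← Real.rpow_natCast, ← Real.rpow_mul (by positivity)]
  norm_num [trace, mul_apply, Finset.sum_comm (γ := m), sq]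

theorem Matrix.isStarProjection_mul_transpose [Fintype k] [DecidableEq k] {U : Matrix m k ℝ}
    (hU : Uᵀ * U = 1) : IsStarProjection (U * Uᵀ) where
  isIdempotentElem := by
    rw [IsIdempotentElem, Matrix.mul_assoc, ← Matrix.mul_assoc Uᵀ, hU, Matrix.one_mul]
  isSelfAdjoint := by
    rw [IsSelfAdjoint, star_eq_conjTranspose, conjTranspose_eq_transpose_of_trivial,
      transpose_mul, transpose_transpose]

variable {P : Matrix m m ℝ}

theorem IsStarProjection.transpose_eq (hP : IsStarProjection P) : Pᵀ = P := by
  simpa [star_eq_conjTranspose, conjTranspose_eq_transpose_of_trivial] using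
    hP.isSelfAdjoint.star_eq

theorem IsStarProjection.frobenius_norm_sq_mul (hP : IsStarProjection P) (M : Matrix m n ℝ) :
    ‖P * M‖ ^ 2 = (Mᵀ * P * M).trace := by
  rw [frobenius_norm_sq_eq_trace_s13, transpose_mul, hP.transpose_eq, Matrix.mul_assoc,
    ← Matrix.mul_assoc P, hP.isIdempotentElem.eq, Matrix.mul_assoc]

variable [DecidableEq m]

theorem IsStarProjection.frobenius_norm_mul_left_le (hP : IsStarProjection P)
    (M : Matrix m n ℝ) : ‖P * M‖ ≤ ‖M‖ := by
  have hsum : ‖P * M‖ ^ 2 + ‖(1 - P) * M‖ ^ 2 = ‖M‖ ^ 2 := by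
    rw [hP.frobenius_norm_sq_mul, hP.one_sub.frobenius_norm_sq_mul, ← trace_add,
      ← Matrix.add_mul, ← Matrix.mul_add, add_sub_cancel, Matrix.mul_one,
      frobenius_norm_sq_eq_trace_s13]
  exact (sq_le_sq₀ (norm_nonneg _) (norm_nonneg _)).mp
    (by nlinarith [sq_nonneg ‖(1 - P) * M‖])

theorem IsStarProjection.frobenius_norm_mul_right_le (hP : IsStarProjection P)
    (M : Matrix n m ℝ) : ‖M * P‖ ≤ ‖M‖ := by
  simpa [← frobenius_norm_transpose (M * P), transpose_mul, hP.transpose_eq] using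
    hP.frobenius_norm_mul_left_le Mᵀ

end FrobeniusProjection

section MeanValue

variable {E F : Type*} [NormedAddCommGroup E] [NormedSpace ℝ E] [NormedAddCommGroup F]
  {f g f' g' : ℝ → E} {a b C : ℝ}

theorem norm_sub_sub_le_of_norm_deriv_sub_le (hab : a ≤ b)
    (hf : ∀ t ∈ Icc a b, HasDerivAt f (f' t) t) (hg : ∀ t ∈ Icc a b, HasDerivAt g (g' t) t)
    (hC : ∀ t ∈ Icc a b, ‖f' t - g' t‖ ≤ C) :
    ‖(f b - g b) - (f a - g a)‖ ≤ C * (b - a) :=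
  norm_image_sub_le_of_norm_deriv_le_segment' (f := f - g)
    (fun t ht => ((hf t ht).sub (hg t ht)).hasDerivWithinAt)
    (fun t ht => hC t (Ico_subset_Icc_self ht)) b (right_mem_Icc.mpr hab)

/-- Compare `f` with the straight line `t ↦ t • v`: both ends agree for `f`, so the line's
total displacement `(b - a) • v` is at most `C * (b - a)`. -/
theorem norm_le_of_norm_deriv_sub_le_of_eq (hab : a < b)
    (hf : ∀ t ∈ Icc a b, HasDerivAt f (f' t) t) (hfab : f a = f b) {v : E}
    (hv : ∀ t ∈ Icc a b, ‖f' t - v‖ ≤ C) : ‖v‖ ≤ C := by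
  have hline : ∀ t ∈ Icc a b, HasDerivAt (fun s : ℝ => s • v) v t := fun t _ => by
    simpa using (hasDerivAt_id t).smul_const v
  have h := norm_sub_sub_le_of_norm_deriv_sub_le hab.le hf hline hv
  rw [hfab, sub_sub_sub_cancel_left, ← sub_smul, norm_smul, norm_sub_rev,
    Real.norm_of_nonneg (by linarith), mul_comm] at h
  exact le_of_mul_le_mul_right h (sub_pos.mpr hab)

theorem norm_comp_sub_le_of_norm_deriv_le {G : E → F} {cl B : ℝ} (hcl : 0 ≤ cl)
    (hG : ∀ x y, ‖G x - G y‖ ≤ cl * ‖x - y‖)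
    (hf : ∀ t ∈ Icc a b, HasDerivAt f (f' t) t) (hf' : ∀ t ∈ Icc a b, ‖f' t‖ ≤ B)
    {t : ℝ} (ht : t ∈ Icc a b) : ‖G (f t) - G (f a)‖ ≤ cl * B * (b - a) := by
  have hab : a ≤ b := ht.1.trans ht.2
  have hB : 0 ≤ B := (norm_nonneg _).trans (hf' a (left_mem_Icc.mpr hab))
  have hdist : ‖f t - f a‖ ≤ B * (t - a) :=
    norm_image_sub_le_of_norm_deriv_le_segment' (fun s hs => (hf s hs).hasDerivWithinAt)
      (fun s hs => hf' s (Ico_subset_Icc_self hs)) t ht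
  calc ‖G (f t) - G (f a)‖ ≤ cl * ‖f t - f a‖ := hG _ _
    _ ≤ cl * (B * (t - a)) := by gcongr
    _ ≤ cl * B * (b - a) := by rw [mul_assoc]; gcongr; exact ht.2

end MeanValue

section MatrixDeriv

variable {l m n : Type*} [Fintype l] [Fintype m] [Fintype n]
  {f : ℝ → Matrix m n ℝ} {f' : Matrix m n ℝ} {t : ℝ}

theorem HasDerivAt.matrix_transpose (hf : HasDerivAt f f' t) :
    HasDerivAt (fun s => (f s)ᵀ) f'ᵀ t :=
  (LinearMap.toContinuousLinearMap (transposeLinearEquiv m n ℝ ℝ).toLinearMap).hasFDerivAt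
    |>.comp_hasDerivAt t hf

theorem HasDerivAt.const_matrix_mul (A : Matrix l m ℝ) (hf : HasDerivAt f f' t) :
    HasDerivAt (fun s => A * f s) (A * f') t :=
  (LinearMap.toContinuousLinearMap (mulLeftLinearMap n ℝ A)).hasFDerivAt.comp_hasDerivAt t hf

theorem HasDerivAt.matrix_mul_const_s13 (A : Matrix n l ℝ) (hf : HasDerivAt f f' t) :
    HasDerivAt (fun s => f s * A) (f' * A) t :=
  (LinearMap.toContinuousLinearMap (mulRightLinearMap m ℝ A)).hasFDerivAt.comp_hasDerivAt t hf

end MatrixDeriv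

section ProjectedFlows

variable {m n r : Type*} [Fintype m] [Fintype n] [Fintype r] [DecidableEq m]
  {G : Matrix m n ℝ → Matrix m n ℝ} {cl B a b : ℝ} {P : Matrix m m ℝ}

/-- The tangent projector `P(Y)` at `Y = U S Vᵀ`. -/
def tangentProj (U : Matrix m r ℝ) (V : Matrix n r ℝ) (X : Matrix m n ℝ) : Matrix m n ℝ :=
  U * Uᵀ * X - U * Uᵀ * X * (V * Vᵀ) + X * (V * Vᵀ)

theorem norm_one_sub_mul_le_of_mul_eq (hP : IsStarProjection P) {U : Matrix m r ℝ}
    (hPU : P * U = U) (V : Matrix n r ℝ) (X : Matrix m n ℝ) :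
    ‖(1 - P) * X‖ ≤ ‖X - tangentProj U V X‖ + ‖(1 - P) * (X * (V * Vᵀ))‖ := by
  have hU : (1 - P) * U = 0 := by rw [Matrix.sub_mul, Matrix.one_mul, hPU, sub_self]
  have hsplit : (1 - P) * X = (1 - P) * (X - tangentProj U V X) + (1 - P) * (X * (V * Vᵀ)) := by
    simp only [tangentProj, Matrix.mul_add, Matrix.mul_sub, ← Matrix.mul_assoc, hU,
      Matrix.zero_mul]
    abel
  rw [hsplit]
  exact (norm_add_le _ _).trans (add_le_add_left (hP.one_sub.frobenius_norm_mul_left_le _) _)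

theorem norm_one_sub_mul_mul_le_of_range_endpoints (hcl : 0 ≤ cl)
    (hG : ∀ X Y, ‖G X - G Y‖ ≤ cl * ‖X - Y‖) (hGB : ∀ X, ‖G X‖ ≤ B) (hab : a < b)
    (hP : IsStarProjection P) {Q : Matrix n n ℝ} [DecidableEq n] (hQ : IsStarProjection Q)
    {Z : ℝ → Matrix m n ℝ} (hZ : ∀ t ∈ Icc a b, HasDerivAt Z (-(G (Z t) * Q)) t)
    (hZa : P * Z a = Z a) (hZb : P * Z b = Z b) :
    ‖(1 - P) * (G (Z a) * Q)‖ ≤ cl * B * (b - a) := by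
  have hderiv : ∀ t ∈ Icc a b,
      HasDerivAt (fun s => P * Z s - Z s) ((1 - P) * (G (Z t) * Q)) t := fun t ht =>
    (((hZ t ht).const_matrix_mul P).sub (hZ t ht)).congr_deriv (by
      rw [Matrix.sub_mul, Matrix.one_mul, Matrix.mul_neg, sub_neg_eq_add, neg_add_eq_sub])
  refine norm_le_of_norm_deriv_sub_le_of_eq hab hderiv (by simp [hZa, hZb]) fun t ht => ?_
  calc ‖(1 - P) * (G (Z t) * Q) - (1 - P) * (G (Z a) * Q)‖
      = ‖(1 - P) * ((G (Z t) - G (Z a)) * Q)‖ := by rw [← Matrix.mul_sub, ← Matrix.sub_mul]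
    _ ≤ ‖G (Z t) - G (Z a)‖ :=
        (hP.one_sub.frobenius_norm_mul_left_le _).trans (hQ.frobenius_norm_mul_right_le _)
    _ ≤ cl * B * (b - a) := norm_comp_sub_le_of_norm_deriv_le hcl hG hZ
        (fun s _ => by simpa using (hQ.frobenius_norm_mul_right_le _).trans (hGB _)) ht

theorem norm_sub_le_of_projected_flow (hcl : 0 ≤ cl)
    (hG : ∀ X Y, ‖G X - G Y‖ ≤ cl * ‖X - Y‖) (hGB : ∀ X, ‖G X‖ ≤ B) (hab : a ≤ b)
    (hP : IsStarProjection P) {Y W : ℝ → Matrix m n ℝ}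
    (hY : ∀ t ∈ Icc a b, HasDerivAt Y (-(P * G (Y t))) t)
    (hW : ∀ t ∈ Icc a b, HasDerivAt W (-G (W t)) t) (hYW : Y a = W a) {δ : ℝ}
    (hδ : ‖(1 - P) * G (Y a)‖ ≤ δ) :
    ‖Y b - W b‖ ≤ (δ + 2 * (cl * B * (b - a))) * (b - a) := by
  suffices hC : ∀ t ∈ Icc a b, ‖-(P * G (Y t)) - -G (W t)‖ ≤ δ + 2 * (cl * B * (b - a)) by
    simpa [hYW] using norm_sub_sub_le_of_norm_deriv_sub_le hab hY hW hC
  intro t ht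
  have hYdrift := norm_comp_sub_le_of_norm_deriv_le hcl hG hY
    (fun s _ => by simpa using (hP.frobenius_norm_mul_left_le _).trans (hGB _)) ht
  have hWdrift := norm_comp_sub_le_of_norm_deriv_le hcl hG hW
    (fun s _ => by simpa using hGB _) ht
  rw [← hYW] at hWdrift
  have hsplit : -(P * G (Y t)) - -G (W t) =
      (G (W t) - G (Y a)) + (1 - P) * G (Y a) + P * (G (Y a) - G (Y t)) := by
    simp only [Matrix.sub_mul, Matrix.mul_sub, Matrix.one_mul]
    abel
  have hPdrift : ‖P * (G (Y a) - G (Y t))‖ ≤ cl * B * (b - a) := by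
    rw [norm_sub_rev] at hYdrift
    exact (hP.frobenius_norm_mul_left_le _).trans hYdrift
  rw [hsplit]
  linarith [norm_add₃_le (a := G (W t) - G (Y a)) (b := (1 - P) * G (Y a))
    (c := P * (G (Y a) - G (Y t)))]

end ProjectedFlows

theorem abcpsi_local_error_bound_truncated_general {m n r : ℕ}
    (G : Matrix (Fin m) (Fin n) ℝ → Matrix (Fin m) (Fin n) ℝ)
    (cl B ε ϑ : ℝ) (hcl : 0 < cl)
    (hlip : ∀ Z1 Z2, ‖G Z1 - G Z2‖ ≤ cl * ‖Z1 - Z2‖)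
    (hbound : ∀ Z, ‖G Z‖ ≤ B)
    (t0 t1 h : ℝ) (hh : 0 < h) (ht1 : t1 = t0 + h)
    (U0 : Matrix (Fin m) (Fin r) ℝ)
    (V0 : Matrix (Fin n) (Fin r) ℝ) (hV0 : V0ᵀ * V0 = 1)
    (S0 : Matrix (Fin r) (Fin r) ℝ)
    -- residual bound at Y0 = U0 S0 V0ᵀ
    (hres : ‖G (U0 * S0 * V0ᵀ) -
        (U0 * U0ᵀ * G (U0 * S0 * V0ᵀ) - U0 * U0ᵀ * G (U0 * S0 * V0ᵀ) * (V0 * V0ᵀ)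
          + G (U0 * S0 * V0ᵀ) * (V0 * V0ᵀ))‖ ≤ ε)
    -- full gradient flow
    (W : ℝ → Matrix (Fin m) (Fin n) ℝ)
    (hW : ∀ t ∈ Set.Icc t0 t1, HasDerivAt W (-(G (W t))) t)
    (hW0 : W t0 = U0 * S0 * V0ᵀ)
    -- K-step
    (K : ℝ → Matrix (Fin m) (Fin r) ℝ)
    (hK : ∀ t ∈ Set.Icc t0 t1, HasDerivAt K (-(G (K t * V0ᵀ) * V0)) t)
    (hK0 : K t0 = U0 * S0)
    -- augmented basis
    (Uhat1 : Matrix (Fin m) (Fin (2 * r)) ℝ) (hUhat1 : Uhat1ᵀ * Uhat1 = 1)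
    (hspanU0 : Uhat1 * Uhat1ᵀ * U0 = U0)
    (hspanK : Uhat1 * Uhat1ᵀ * K t1 = K t1)
    -- L-step
    (L : ℝ → Matrix (Fin n) (Fin (2 * r)) ℝ)
    (hL : ∀ t ∈ Set.Icc t0 t1, HasDerivAt L (-((G (Uhat1 * (L t)ᵀ))ᵀ * Uhat1)) t)
    (hL0 : L t0 = V0 * S0ᵀ * U0ᵀ * Uhat1)
    -- truncation
    (Y1 : Matrix (Fin m) (Fin n) ℝ)
    (htrunc : ‖Uhat1 * (L t1)ᵀ - Y1‖ ≤ ϑ) :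
    ‖Y1 - W t1‖ ≤ h * ε + 3 * cl * B * h ^ 2 + ϑ := by
  have hlt : t0 < t1 := by linarith
  have hdt : t1 - t0 = h := by linarith
  have hP := isStarProjection_mul_transpose hUhat1
  have hZ : ∀ t ∈ Icc t0 t1,
      HasDerivAt (fun s => K s * V0ᵀ) (-(G (K t * V0ᵀ) * (V0 * V0ᵀ))) t := fun t ht =>
    ((hK t ht).matrix_mul_const_s13 V0ᵀ).congr_deriv (by rw [Matrix.neg_mul, Matrix.mul_assoc])
  have hYhat : ∀ t ∈ Icc t0 t1,
      HasDerivAt (fun s => Uhat1 * (L s)ᵀ) (-(Uhat1 * Uhat1ᵀ * G (Uhat1 * (L t)ᵀ))) t :=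
    fun t ht => ((hL t ht).matrix_transpose.const_matrix_mul Uhat1).congr_deriv (by
      rw [transpose_neg, transpose_mul, transpose_transpose, Matrix.mul_neg, Matrix.mul_assoc])
  have hYhat0 : Uhat1 * (L t0)ᵀ = U0 * S0 * V0ᵀ := by
    simp only [hL0, transpose_mul, transpose_transpose, ← Matrix.mul_assoc, hspanU0]
  have hKstep : ‖(1 - Uhat1 * Uhat1ᵀ) * (G (U0 * S0 * V0ᵀ) * (V0 * V0ᵀ))‖ ≤ cl * B * h := by
    have := norm_one_sub_mul_mul_le_of_range_endpoints hcl.le hlip hbound hlt hP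
      (isStarProjection_mul_transpose hV0) hZ
      (by rw [hK0, ← Matrix.mul_assoc, ← Matrix.mul_assoc, hspanU0])
      (by rw [← Matrix.mul_assoc, hspanK])
    rwa [hK0, hdt] at this
  have hleak : ‖(1 - Uhat1 * Uhat1ᵀ) * G (Uhat1 * (L t0)ᵀ)‖ ≤ ε + cl * B * h :=
    hYhat0 ▸ (norm_one_sub_mul_le_of_mul_eq hP hspanU0 V0 _).trans (add_le_add hres hKstep)
  have hflow := norm_sub_le_of_projected_flow hcl.le hlip hbound hlt.le hP hYhat hW
    (hYhat0.trans hW0.symm) hleak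
  rw [hdt] at hflow
  calc ‖Y1 - W t1‖ ≤ ‖Uhat1 * (L t1)ᵀ - Y1‖ + ‖Uhat1 * (L t1)ᵀ - W t1‖ := by
        rw [norm_sub_rev _ Y1]; exact norm_sub_le_norm_sub_add_norm_sub _ _ _
    _ ≤ h * ε + 3 * cl * B * h ^ 2 + ϑ := by linarith

/-- Local error of the abc-PSI after truncation: under the hypotheses of the
local robust error bound of the abc-PSI, if additionally the truncated output `Y1` satisfies
`‖Ŷ1 − Y1‖ ≤ ϑ`, then `‖Y1 − W(t1)‖ ≤ h ε + 3 c_l B h² + ϑ`. -/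
theorem abcpsi_local_error_bound_truncated {m n r : ℕ}
    (ℓ : Matrix (Fin m) (Fin n) ℝ → ℝ)
    (G : Matrix (Fin m) (Fin n) ℝ → Matrix (Fin m) (Fin n) ℝ)
    (hgrad : ∀ Y, HasFDerivAt ℓ (frobCLM (G Y)) Y)
    (cl B ε ϑ : ℝ) (hcl : 0 < cl) (hB : 0 < B)
    (hlip : ∀ Z1 Z2, ‖G Z1 - G Z2‖ ≤ cl * ‖Z1 - Z2‖)
    (hbound : ∀ Z, ‖G Z‖ ≤ B)
    (t0 t1 h : ℝ) (hh : 0 < h) (ht1 : t1 = t0 + h)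
    (U0 : Matrix (Fin m) (Fin r) ℝ) (hU0 : U0ᵀ * U0 = 1)
    (V0 : Matrix (Fin n) (Fin r) ℝ) (hV0 : V0ᵀ * V0 = 1)
    (S0 : Matrix (Fin r) (Fin r) ℝ)
    -- residual bound at Y0 = U0 S0 V0ᵀ
    (hres : ‖G (U0 * S0 * V0ᵀ) -
        (U0 * U0ᵀ * G (U0 * S0 * V0ᵀ) - U0 * U0ᵀ * G (U0 * S0 * V0ᵀ) * (V0 * V0ᵀ)
          + G (U0 * S0 * V0ᵀ) * (V0 * V0ᵀ))‖ ≤ ε)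
    -- full gradient flow
    (W : ℝ → Matrix (Fin m) (Fin n) ℝ)
    (hW : ∀ t ∈ Set.Icc t0 t1, HasDerivAt W (-(G (W t))) t)
    (hW0 : W t0 = U0 * S0 * V0ᵀ)
    -- K-step
    (K : ℝ → Matrix (Fin m) (Fin r) ℝ)
    (hK : ∀ t ∈ Set.Icc t0 t1, HasDerivAt K (-(G (K t * V0ᵀ) * V0)) t)
    (hK0 : K t0 = U0 * S0)
    -- augmented basis
    (Uhat1 : Matrix (Fin m) (Fin (2 * r)) ℝ) (hUhat1 : Uhat1ᵀ * Uhat1 = 1)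
    (hspanU0 : Uhat1 * Uhat1ᵀ * U0 = U0)
    (hspanK : Uhat1 * Uhat1ᵀ * K t1 = K t1)
    -- L-step
    (L : ℝ → Matrix (Fin n) (Fin (2 * r)) ℝ)
    (hL : ∀ t ∈ Set.Icc t0 t1, HasDerivAt L (-((G (Uhat1 * (L t)ᵀ))ᵀ * Uhat1)) t)
    (hL0 : L t0 = V0 * S0ᵀ * U0ᵀ * Uhat1)
    -- truncation
    (Y1 : Matrix (Fin m) (Fin n) ℝ)
    (htrunc : ‖Uhat1 * (L t1)ᵀ - Y1‖ ≤ ϑ) :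
    ‖Y1 - W t1‖ ≤ h * ε + 3 * cl * B * h ^ 2 + ϑ :=
  abcpsi_local_error_bound_truncated_general G cl B ε ϑ hcl hlip hbound t0 t1 h hh ht1 U0 V0 hV0 S0
    hres W hW hW0 K hK hK0 Uhat1 hUhat1 hspanU0 hspanK L hL hL0 Y1 htrunc
end

section
/- (Convergence of the abc-PSI, deterministic form.) Assume ℓ ≥ 0, ∇ℓ is Lipschitz with constant c_l > 0 and bounded by B > 0 in Frobenius norm. Let (Y_t)_{t≥0} be a sequence in ℝ^{m×n}, let (h_t)_{t≥1} be positive step sizes satisfying the Robbins–Monro conditions Σ_{t=1}^∞ h_t = ∞ and Σ_{t=1}^∞ h_t² < ∞, and let (d_t)_{t≥1} be nonnegative reals with Σ_{t=1}^∞ d_t ≤ D < ∞. Suppose that for every t ≥ 1 the descent inequality ℓ(Y_t) ≤ ℓ(Y_{t−1}) − h_t (1 − c_l h_t / 2) g_{t−1}² + c_l d_t holds, where g_{t−1} := ‖P(Y_{t−1}) ∇ℓ(Y_{t−1})‖ ≤ B. Then liminf_{t→∞} g_t² = 0. -/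
/-!
Since `g_t ≤ B`, the descent inequality gives `ℓ(Y_{t+1}) ≤ ℓ(Y_t) - h_{t+1} g_t² + v_t` with
`v_t = c_l B² h_{t+1}² / 2 + c_l d_{t+1}`, whose partial sums are bounded. Telescoping and
`ℓ ≥ 0` make `∑ h_{t+1} g_t²` summable. If `g_t² > ε` held eventually, then `h_{t+1}` would be
dominated by `ε⁻¹ h_{t+1} g_t²` and summable, contradicting `∑ h_t = ∞`; so `g_t²` is frequently
arbitrarily small, which forces its liminf to vanish.
-/

open Matrix Set MeasureTheory Filter

attribute [local instance] Matrix.frobeniusNormedAddCommGroup Matrix.frobeniusNormedSpace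

open Finset

theorem summable_of_le_sub_add {a u v : ℕ → ℝ} {V : ℝ} (ha : ∀ t, 0 ≤ a t)
    (hu : ∀ t, 0 ≤ u t) (hv : ∀ T, ∑ t ∈ range T, v t ≤ V)
    (hstep : ∀ t, a (t + 1) ≤ a t - u t + v t) : Summable u := by
  refine summable_of_sum_range_le hu (c := a 0 + V) fun T => ?_
  calc ∑ t ∈ range T, u t ≤ ∑ t ∈ range T, (a t - a (t + 1) + v t) :=
        sum_le_sum fun t _ => by linarith [hstep t]
    _ = a 0 - a T + ∑ t ∈ range T, v t := by rw [sum_add_distrib, sum_range_sub']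
    _ ≤ a 0 + V := by linarith [ha T, hv T]

theorem frequently_le_of_summable_mul {h x : ℕ → ℝ} (hh : ∀ t, 0 ≤ h t)
    (hdiv : ¬ Summable h) (hsum : Summable fun t => h t * x t) {ε : ℝ} (hε : 0 < ε) :
    ∃ᶠ t in atTop, x t ≤ ε := by
  refine fun hev => hdiv (.of_norm_bounded_eventually_nat (hsum.mul_left ε⁻¹) ?_)
  filter_upwards [hev] with t hxt
  rw [Real.norm_of_nonneg (hh t), ← mul_assoc, mul_comm ε⁻¹, mul_assoc]
  refine le_mul_of_one_le_right (hh t) ?_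
  rw [le_inv_mul_iff₀ hε, mul_one]
  exact (not_le.mp hxt).le

theorem liminf_eq_zero_of_frequently_le {ι : Type*} {l : Filter ι} {x : ι → ℝ}
    (hx : ∀ i, 0 ≤ x i) (hfreq : ∀ ε > 0, ∃ᶠ i in l, x i ≤ ε) : liminf x l = 0 := by
  have hbdd : IsBoundedUnder (· ≥ ·) l x := isBoundedUnder_of ⟨0, hx⟩
  refine le_antisymm (le_of_forall_pos_le_add fun ε hε => ?_) ?_
  · rw [zero_add]
    exact liminf_le_of_frequently_le (hfreq ε hε) hbdd
  · exact le_liminf_of_le (.of_frequently_le (hfreq 1 one_pos)) (.of_forall hx)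

theorem liminf_eq_zero_of_summable_mul {h x : ℕ → ℝ} (hh : ∀ t, 0 ≤ h t)
    (hdiv : ¬ Summable h) (hsum : Summable fun t => h t * x t) (hx : ∀ t, 0 ≤ x t) :
    liminf x atTop = 0 :=
  liminf_eq_zero_of_frequently_le hx fun _ hε => frequently_le_of_summable_mul hh hdiv hsum hε

theorem abcpsi_convergence_general {m n : ℕ}
    (ℓ : Matrix (Fin m) (Fin n) ℝ → ℝ)
    (cl B D : ℝ) (hcl : 0 < cl)
    (hnonneg : ∀ Z, 0 ≤ ℓ Z)
    (Y : ℕ → Matrix (Fin m) (Fin n) ℝ)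
    (h : ℕ → ℝ) (hpos : ∀ t, 0 < h (t + 1))
    (hRM1 : Filter.Tendsto (fun T => ∑ t ∈ Finset.range T, h (t + 1)) Filter.atTop
      Filter.atTop)
    (hRM2 : Summable fun t => h (t + 1) ^ 2)
    (d : ℕ → ℝ)
    (hdD : ∀ T, ∑ t ∈ Finset.range T, d (t + 1) ≤ D)
    (g : ℕ → ℝ) (hg0 : ∀ t, 0 ≤ g t) (hgB : ∀ t, g t ≤ B)
    (hdesc : ∀ t : ℕ, ℓ (Y (t + 1)) ≤
      ℓ (Y t) - h (t + 1) * (1 - cl * h (t + 1) / 2) * g t ^ 2 + cl * d (t + 1)) :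
    Filter.liminf (fun t => g t ^ 2) Filter.atTop = 0 := by
  have hstep : ∀ t, ℓ (Y (t + 1)) ≤ ℓ (Y t) - h (t + 1) * g t ^ 2 +
      (cl / 2 * B ^ 2 * h (t + 1) ^ 2 + cl * d (t + 1)) := fun t => by
    have hg2 : g t ^ 2 ≤ B ^ 2 := pow_le_pow_left₀ (hg0 t) (hgB t) 2
    have hcl_h : 0 ≤ cl / 2 * h (t + 1) ^ 2 := by positivity
    nlinarith [hdesc t, mul_le_mul_of_nonneg_left hg2 hcl_h]
  have hperturb : ∀ T, ∑ t ∈ range T, (cl / 2 * B ^ 2 * h (t + 1) ^ 2 + cl * d (t + 1)) ≤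
      cl / 2 * B ^ 2 * ∑' t, h (t + 1) ^ 2 + cl * D := fun T => by
    rw [sum_add_distrib, ← mul_sum, ← mul_sum]
    gcongr
    · exact hRM2.sum_le_tsum _ fun t _ => sq_nonneg _
    · exact hdD T
  have hsum : Summable fun t => h (t + 1) * g t ^ 2 :=
    summable_of_le_sub_add (fun t => hnonneg (Y t))
      (fun t => mul_nonneg (hpos t).le (sq_nonneg _)) hperturb hstep
  have hdiv : ¬ Summable fun t => h (t + 1) :=
    (not_summable_iff_tendsto_nat_atTop_of_nonneg fun t => (hpos t).le).2 hRM1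
  exact liminf_eq_zero_of_summable_mul (fun t => (hpos t).le) hdiv hsum fun t => sq_nonneg _

/-- Convergence of the abc-PSI, deterministic form: under the Robbins–Monro
step-size conditions and the per-step descent inequality with summable perturbations,
`liminf g_t² = 0`, where `g_t = ‖P(Y_t)∇ℓ(Y_t)‖ ≤ B` is the projected gradient norm. -/
theorem abcpsi_convergence {m n : ℕ}
    (ℓ : Matrix (Fin m) (Fin n) ℝ → ℝ)
    (G : Matrix (Fin m) (Fin n) ℝ → Matrix (Fin m) (Fin n) ℝ)
    (hgrad : ∀ Y, HasFDerivAt ℓ (frobCLM (G Y)) Y)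
    (cl B D : ℝ) (hcl : 0 < cl) (hB : 0 < B)
    (hnonneg : ∀ Z, 0 ≤ ℓ Z)
    (hlip : ∀ Z1 Z2, ‖G Z1 - G Z2‖ ≤ cl * ‖Z1 - Z2‖)
    (hbound : ∀ Z, ‖G Z‖ ≤ B)
    (Y : ℕ → Matrix (Fin m) (Fin n) ℝ)
    (h : ℕ → ℝ) (hpos : ∀ t, 0 < h (t + 1))
    (hRM1 : Filter.Tendsto (fun T => ∑ t ∈ Finset.range T, h (t + 1)) Filter.atTop
      Filter.atTop)
    (hRM2 : Summable fun t => h (t + 1) ^ 2)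
    (d : ℕ → ℝ) (hd0 : ∀ t, 0 ≤ d (t + 1))
    (hdD : ∀ T, ∑ t ∈ Finset.range T, d (t + 1) ≤ D)
    (g : ℕ → ℝ) (hg0 : ∀ t, 0 ≤ g t) (hgB : ∀ t, g t ≤ B)
    (hdesc : ∀ t : ℕ, ℓ (Y (t + 1)) ≤
      ℓ (Y t) - h (t + 1) * (1 - cl * h (t + 1) / 2) * g t ^ 2 + cl * d (t + 1)) :
    Filter.liminf (fun t => g t ^ 2) Filter.atTop = 0 :=
  abcpsi_convergence_general ℓ cl B D hcl hnonneg Y h hpos hRM1 hRM2 d hdD g hg0 hgB hdesc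
end
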